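/- arXiv:1710.04557 — 2 statements merged into one kernel-verified Lean document; each statement's English description precedes it below -/
import Mathlib

section
/- Let g and ψ be non-negative multiplicative functions on ℕ and set h = 1 * ψ (Dirichlet convolution, so h(n) = ∑_{d | n} ψ(d)). Then for every real z ≥ 1, ∑_{a ≤ z} g(a) h(a) ≤ M · ∑_{a ≤ z} g(a), where M = ∏_{p ≤ z} [1 + ∑_{v=1}^{⌊log z / log p⌋} ψ(p^v) ∑_{j=v}^{∞} g(p^j)] (assuming all the series ∑_{j≥v} g(p^j) converge and the product is finite). -/
/-!
Swapping the sums turns the left side into `∑_{d ≤ z} ψ(d) ∑_{a ≤ z, d ∣ a} g(a)`. Each `a`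
divisible by `d` splits as `a = c b` with `c` the part of `a` supported on the primes of `d` and
`b ≤ z` coprime to `c`, so `g(a) = g(c) g(b)` and the inner sum is at most
`∏_{p ∣ d} ∑_{j ≥ v_p(d)} g(p^j) · ∑_{b ≤ z} g(b)`. After multiplying by `ψ(d)` the weight of `d`
is multiplicative in the exponents `v_p(d) ≤ log z / log p`, and since `d` is determined by its
exponent vector, the sum of these weights over `d ≤ z` is bounded by the expanded Euler product `M`.
-/

open Finset

theorem sum_prod_factorization_le_prod_sum {M : Type*} [CommSemiring M] [PartialOrder M]
    [IsOrderedRing M] {s Q : Finset ℕ} (T : ℕ → Finset ℕ) (F : ℕ → ℕ → M)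
    (hF : ∀ p k, 0 ≤ F p k)
    (hs : ∀ n ∈ s, n ≠ 0 ∧ n.primeFactors ⊆ Q ∧ ∀ p ∈ Q, n.factorization p ∈ T p) :
    ∑ n ∈ s, ∏ p ∈ Q, F p (n.factorization p) ≤ ∏ p ∈ Q, ∑ k ∈ T p, F p k := by
  set φ : ℕ → (∀ p ∈ Q, ℕ) := fun n p _ => n.factorization p
  have hφ : Set.InjOn φ s := by
    intro m hm n hn hmn
    obtain ⟨hm0, hmQ, -⟩ := hs m hm
    obtain ⟨hn0, hnQ, -⟩ := hs n hn
    refine Nat.eq_of_factorization_eq hm0 hn0 fun p => ?_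
    by_cases hp : p ∈ Q
    · exact congr_fun (congr_fun hmn p) hp
    · rw [Finsupp.notMem_support_iff.mp (mt (@hmQ p) hp),
        Finsupp.notMem_support_iff.mp (mt (@hnQ p) hp)]
  have hφs : s.image φ ⊆ Q.pi T := by
    simp only [subset_iff, mem_image, mem_pi]
    rintro _ ⟨n, hn, rfl⟩ p hp
    exact (hs n hn).2.2 p hp
  calc ∑ n ∈ s, ∏ p ∈ Q, F p (n.factorization p)
      = ∑ x ∈ s.image φ, ∏ p ∈ Q.attach, F p (x p.1 p.2) := by
        rw [sum_image hφ]
        exact sum_congr rfl fun n _ => (prod_attach Q fun p => F p (n.factorization p)).symm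
    _ ≤ ∑ x ∈ Q.pi T, ∏ p ∈ Q.attach, F p (x p.1 p.2) :=
        sum_le_sum_of_subset_of_nonneg hφs fun x _ _ => prod_nonneg fun p _ => hF _ _
    _ = ∏ p ∈ Q, ∑ k ∈ T p, F p k := (prod_sum Q T F).symm

theorem eq_prod_pow_factorization_of_primeFactors_subset {M : Type*} [CommMonoid M] (f : ℕ → M)
    (hf1 : f 1 = 1) (hmul : ∀ m n : ℕ, Nat.Coprime m n → f (m * n) = f m * f n)
    {n : ℕ} (hn : n ≠ 0) {Q : Finset ℕ} (hQ : n.primeFactors ⊆ Q) :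
    f n = ∏ p ∈ Q, f (p ^ n.factorization p) := by
  rw [Nat.multiplicative_factorization f hmul hf1 hn,
    Finsupp.prod_of_support_subset _ hQ _ fun p _ => by rw [pow_zero, hf1]]

theorem sum_Icc_le_tsum_nat_add {f : ℕ → ℝ} (hf0 : ∀ k, 0 ≤ f k) (hf : Summable f) (V M : ℕ) :
    ∑ k ∈ Icc V M, f k ≤ ∑' j, f (V + j) := by
  rw [← Ico_add_one_right_eq_Icc, sum_Ico_eq_sum_range]
  exact (hf.comp_injective (add_right_injective V)).sum_le_tsum _ fun j _ => hf0 _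

theorem sum_Icc_mul_sum_divisors {R : Type*} [CommSemiring R] (N : ℕ) (f g : ℕ → R) :
    ∑ a ∈ Icc 1 N, f a * ∑ d ∈ a.divisors, g d =
      ∑ d ∈ Icc 1 N, g d * ∑ a ∈ Icc 1 N with d ∣ a, f a := by
  simp only [mul_sum]
  refine (sum_comm' fun a d => ?_).trans
    (sum_congr rfl fun d _ => sum_congr rfl fun a _ => mul_comm _ _)
  simp only [mem_Icc, mem_filter, Nat.mem_divisors]
  constructor
  · rintro ⟨⟨ha1, haN⟩, hda, -⟩
    exact ⟨⟨⟨ha1, haN⟩, hda⟩, Nat.pos_of_dvd_of_pos hda ha1, (Nat.le_of_dvd ha1 hda).trans haN⟩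
  · rintro ⟨⟨⟨ha1, haN⟩, hda⟩, -⟩
    exact ⟨⟨ha1, haN⟩, hda, by omega⟩

theorem primeFactors_subset_filter_prime_Icc {d N : ℕ} (hd : d ∈ Icc 1 N) :
    d.primeFactors ⊆ {p ∈ Icc 1 N | p.Prime} := by
  obtain ⟨hd1, hdN⟩ := mem_Icc.mp hd
  intro p hp
  have hp' := Nat.prime_of_mem_primeFactors hp
  exact mem_filter.mpr ⟨mem_Icc.mpr ⟨hp'.one_le,
    (Nat.le_of_dvd hd1 (Nat.dvd_of_mem_primeFactors hp)).trans hdN⟩, hp'⟩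

theorem factorization_le_floor_log_div_log {n p : ℕ} (hp : p.Prime) (hn : n ≠ 0) {z : ℝ}
    (hnz : (n : ℝ) ≤ z) : n.factorization p ≤ ⌊Real.log z / Real.log p⌋₊ := by
  have hlogp : 0 < Real.log p := Real.log_pos (by exact_mod_cast hp.one_lt)
  have hpow : ((p ^ n.factorization p : ℕ) : ℝ) ≤ z :=
    (Nat.cast_le.mpr (Nat.le_of_dvd (Nat.pos_of_ne_zero hn) (Nat.ordProj_dvd n p))).trans hnz
  refine Nat.le_floor ((le_div_iff₀ hlogp).mpr ?_)
  rw [← Real.log_pow]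
  push_cast at hpow
  exact Real.log_le_log (pow_pos (by exact_mod_cast hp.pos) _) hpow

def partOn (S : Finset ℕ) (n : ℕ) : ℕ := ∏ p ∈ S, p ^ n.factorization p

section partOn

variable {S : Finset ℕ} (hS : ∀ p ∈ S, p.Prime)
include hS

theorem partOn_ne_zero (n : ℕ) : partOn S n ≠ 0 :=
  prod_ne_zero_iff.mpr fun p hp => pow_ne_zero _ (hS p hp).ne_zero

theorem factorization_partOn (n q : ℕ) :
    (partOn S n).factorization q = if q ∈ S then n.factorization q else 0 := by
  rw [partOn, Nat.factorization_prod fun p hp => pow_ne_zero _ (hS p hp).ne_zero,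
    Finsupp.finsetSum_apply, ← sum_ite_eq' S q (fun p => n.factorization p)]
  refine sum_congr rfl fun p hp => ?_
  rw [(hS p hp).factorization_pow, Finsupp.single_apply]

theorem primeFactors_partOn_subset (n : ℕ) : (partOn S n).primeFactors ⊆ S := by
  intro q hq
  have hq0 : (partOn S n).factorization q ≠ 0 := Finsupp.mem_support_iff.mp hq
  rw [factorization_partOn hS] at hq0
  by_contra hqS
  exact hq0 (if_neg hqS)

theorem partOn_dvd {n : ℕ} (hn : n ≠ 0) : partOn S n ∣ n := by
  refine (Nat.factorization_le_iff_dvd (partOn_ne_zero hS n) hn).mp fun q => ?_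
  rw [factorization_partOn hS]
  split_ifs <;> simp

theorem div_partOn_pos {n : ℕ} (hn : n ≠ 0) : 0 < n / partOn S n :=
  Nat.div_pos (Nat.le_of_dvd (Nat.pos_of_ne_zero hn) (partOn_dvd hS hn))
    (Nat.pos_of_ne_zero (partOn_ne_zero hS n))

theorem coprime_partOn_div {n : ℕ} (hn : n ≠ 0) : (partOn S n).Coprime (n / partOn S n) := by
  have hdvd := partOn_dvd hS hn
  have hquot : n / partOn S n ≠ 0 := (div_partOn_pos hS hn).ne'
  refine Nat.coprime_of_dvd fun q hq hqpart hqquot => ?_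
  have hqS : q ∈ S := primeFactors_partOn_subset hS n (Nat.mem_primeFactors.mpr
    ⟨hq, hqpart, partOn_ne_zero hS n⟩)
  have hpos := hq.factorization_pos_of_dvd hquot hqquot
  rw [Nat.factorization_div hdvd, Finsupp.tsub_apply, factorization_partOn hS, if_pos hqS,
    Nat.sub_self] at hpos
  exact hpos.false

end partOn

theorem sum_le_sum_image_partOn_mul_sum {g : ℕ → ℝ} (hg0 : ∀ n, 0 ≤ g n)
    (hgmul : ∀ m n : ℕ, Nat.Coprime m n → g (m * n) = g m * g n)
    {S : Finset ℕ} (hS : ∀ p ∈ S, p.Prime) {s : Finset ℕ} {N : ℕ} (hs : s ⊆ Icc 1 N) :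
    ∑ a ∈ s, g a ≤ (∑ x ∈ s.image (partOn S), g x) * ∑ b ∈ Icc 1 N, g b := by
  have hs0 : ∀ a ∈ s, a ≠ 0 := fun a ha => by have := mem_Icc.mp (hs ha); omega
  have hsplit : ∀ a ∈ s, partOn S a * (a / partOn S a) = a := fun a ha =>
    Nat.mul_div_cancel' (partOn_dvd hS (hs0 a ha))
  set e : ℕ → ℕ × ℕ := fun a => (partOn S a, a / partOn S a)
  have he : Set.InjOn e s := fun a ha b hb hab => by
    rw [← hsplit a ha, ← hsplit b hb]
    exact congrArg₂ (· * ·) (congrArg Prod.fst hab) (congrArg Prod.snd hab)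
  have hge : ∀ a ∈ s, g a = g (e a).1 * g (e a).2 := fun a ha => by
    rw [← hgmul _ _ (coprime_partOn_div hS (hs0 a ha)), hsplit a ha]
  have himage : s.image e ⊆ s.image (partOn S) ×ˢ Icc 1 N := by
    simp only [subset_iff, mem_image, mem_product, mem_Icc]
    rintro _ ⟨a, ha, rfl⟩
    exact ⟨⟨a, ha, rfl⟩, div_partOn_pos hS (hs0 a ha),
      (Nat.div_le_self _ _).trans (mem_Icc.mp (hs ha)).2⟩
  calc ∑ a ∈ s, g a = ∑ x ∈ s.image e, g x.1 * g x.2 := by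
        rw [sum_image he]; exact sum_congr rfl hge
    _ ≤ ∑ x ∈ s.image (partOn S) ×ˢ Icc 1 N, g x.1 * g x.2 :=
        sum_le_sum_of_subset_of_nonneg himage fun _ _ _ => mul_nonneg (hg0 _) (hg0 _)
    _ = (∑ x ∈ s.image (partOn S), g x) * ∑ b ∈ Icc 1 N, g b := by
        rw [sum_mul_sum, sum_product]

theorem sum_image_partOn_primeFactors_le {g : ℕ → ℝ} (hg0 : ∀ n, 0 ≤ g n) (hg1 : g 1 = 1)
    (hgmul : ∀ m n : ℕ, Nat.Coprime m n → g (m * n) = g m * g n)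
    (hsum : ∀ p : ℕ, p.Prime → Summable fun j : ℕ => g (p ^ j)) {d : ℕ} (hd : d ≠ 0)
    {s : Finset ℕ} (hs : ∀ a ∈ s, a ≠ 0 ∧ d ∣ a) :
    ∑ x ∈ s.image (partOn d.primeFactors), g x ≤
      ∏ p ∈ d.primeFactors, ∑' j, g (p ^ (d.factorization p + j)) := by
  set S := d.primeFactors
  have hS : ∀ p ∈ S, p.Prime := fun p hp => Nat.prime_of_mem_primeFactors hp
  calc ∑ x ∈ s.image (partOn S), g x
      = ∑ x ∈ s.image (partOn S), ∏ p ∈ S, g (p ^ x.factorization p) := by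
        refine sum_congr rfl fun x hx => ?_
        obtain ⟨a, -, rfl⟩ := mem_image.mp hx
        exact eq_prod_pow_factorization_of_primeFactors_subset g hg1 hgmul
          (partOn_ne_zero hS a) (primeFactors_partOn_subset hS a)
    _ ≤ ∏ p ∈ S, ∑ k ∈ Icc (d.factorization p) (s.sup id), g (p ^ k) := by
        refine sum_prod_factorization_le_prod_sum _ (fun p k => g (p ^ k)) (fun _ _ => hg0 _) ?_
        rintro _ hx
        obtain ⟨a, ha, rfl⟩ := mem_image.mp hx
        obtain ⟨ha0, hda⟩ := hs a ha
        refine ⟨partOn_ne_zero hS a, primeFactors_partOn_subset hS a, fun p hp => ?_⟩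
        rw [factorization_partOn hS, if_pos hp, mem_Icc]
        exact ⟨(Nat.factorization_le_iff_dvd hd ha0).mpr hda p,
          (Nat.factorization_lt p ha0).le.trans (le_sup (f := id) ha)⟩
    _ ≤ ∏ p ∈ S, ∑' j, g (p ^ (d.factorization p + j)) :=
        prod_le_prod (fun p _ => sum_nonneg fun _ _ => hg0 _) fun p hp =>
          sum_Icc_le_tsum_nat_add (fun _ => hg0 _) (hsum p (hS p hp)) _ _

theorem sum_filter_dvd_le {g : ℕ → ℝ} (hg0 : ∀ n, 0 ≤ g n) (hg1 : g 1 = 1)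
    (hgmul : ∀ m n : ℕ, Nat.Coprime m n → g (m * n) = g m * g n)
    (hsum : ∀ p : ℕ, p.Prime → Summable fun j : ℕ => g (p ^ j)) {d : ℕ} (hd : d ≠ 0) (N : ℕ) :
    ∑ a ∈ Icc 1 N with d ∣ a, g a ≤
      (∏ p ∈ d.primeFactors, ∑' j, g (p ^ (d.factorization p + j))) * ∑ b ∈ Icc 1 N, g b := by
  have hS : ∀ p ∈ d.primeFactors, p.Prime := fun p hp => Nat.prime_of_mem_primeFactors hp
  refine (sum_le_sum_image_partOn_mul_sum hg0 hgmul hS (filter_subset _ _)).trans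
    (mul_le_mul_of_nonneg_right ?_ (sum_nonneg fun _ _ => hg0 _))
  refine sum_image_partOn_primeFactors_le hg0 hg1 hgmul hsum hd fun a ha => ?_
  obtain ⟨ha, hda⟩ := mem_filter.mp ha
  exact ⟨by have := mem_Icc.mp ha; omega, hda⟩

/-- `M = ∏_{p ≤ z} ∑_{v ≤ ⌊log z / log p⌋} decouplingWeight g ψ p v`, the `v = 0` term giving
the `1`. -/
noncomputable def decouplingWeight (g ψ : ℕ → ℝ) (p v : ℕ) : ℝ :=
  if v = 0 then 1 else ψ (p ^ v) * ∑' j, g (p ^ (v + j))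

section decouplingWeight

variable {g ψ : ℕ → ℝ}

theorem decouplingWeight_nonneg (hg0 : ∀ n, 0 ≤ g n) (hψ0 : ∀ n, 0 ≤ ψ n) (p v : ℕ) :
    0 ≤ decouplingWeight g ψ p v := by
  unfold decouplingWeight
  split_ifs
  · exact zero_le_one
  · exact mul_nonneg (hψ0 _) (tsum_nonneg fun _ => hg0 _)

theorem sum_range_decouplingWeight (p U : ℕ) :
    ∑ v ∈ range (U + 1), decouplingWeight g ψ p v =
      1 + ∑ v ∈ Icc 1 U, ψ (p ^ v) * ∑' j, g (p ^ (v + j)) := by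
  rw [range_eq_Ico, sum_eq_sum_Ico_succ_bot (by omega : 0 < U + 1), zero_add,
    Ico_add_one_right_eq_Icc]
  refine congrArg₂ (· + ·) (if_pos rfl) (sum_congr rfl fun v hv => if_neg ?_)
  exact Nat.one_le_iff_ne_zero.mp (mem_Icc.mp hv).1

theorem mul_prod_tsum_eq_prod_decouplingWeight (hψ1 : ψ 1 = 1)
    (hψmul : ∀ m n : ℕ, Nat.Coprime m n → ψ (m * n) = ψ m * ψ n) {d : ℕ} (hd : d ≠ 0)
    {Q : Finset ℕ} (hQ : d.primeFactors ⊆ Q) :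
    ψ d * ∏ p ∈ d.primeFactors, ∑' j, g (p ^ (d.factorization p + j)) =
      ∏ p ∈ Q, decouplingWeight g ψ p (d.factorization p) := by
  rw [eq_prod_pow_factorization_of_primeFactors_subset ψ hψ1 hψmul hd subset_rfl,
    ← prod_mul_distrib, ← Finsupp.prod_of_support_subset d.factorization hQ (decouplingWeight g ψ)
      fun _ _ => if_pos rfl]
  refine prod_congr rfl fun p hp => (if_neg ?_).symm
  exact Finsupp.mem_support_iff.mp hp

end decouplingWeight

/-- Decoupling lemma: for non-negative multiplicative `g, ψ` with `h = 1 * ψ`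
(Dirichlet convolution), and `z ≥ 1`,
`∑_{a ≤ z} g(a) h(a) ≤ M(g,ψ) ∑_{a ≤ z} g(a)` where
`M = ∏_{p ≤ z} [1 + ∑_{v=1}^{⌊log z/log p⌋} ψ(p^v) ∑_{j ≥ v} g(p^j)]`. -/
theorem stmt_3 (g ψ : ℕ → ℝ)
    (hg0 : ∀ n, 0 ≤ g n) (hψ0 : ∀ n, 0 ≤ ψ n)
    (hg1 : g 1 = 1) (hgmul : ∀ m n : ℕ, Nat.Coprime m n → g (m * n) = g m * g n)
    (hψ1 : ψ 1 = 1) (hψmul : ∀ m n : ℕ, Nat.Coprime m n → ψ (m * n) = ψ m * ψ n)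
    (hsum : ∀ p : ℕ, p.Prime → Summable fun j : ℕ => g (p ^ j))
    (z : ℝ) (hz : 1 ≤ z) :
    ∑ a ∈ Finset.Icc 1 ⌊z⌋₊, g a * (∑ d ∈ a.divisors, ψ d) ≤
      (∏ p ∈ (Finset.Icc 1 ⌊z⌋₊).filter Nat.Prime,
          (1 + ∑ v ∈ Finset.Icc 1 ⌊Real.log z / Real.log (p : ℝ)⌋₊,
            ψ (p ^ v) * ∑' j : ℕ, g (p ^ (v + j)))) *
        ∑ a ∈ Finset.Icc 1 ⌊z⌋₊, g a := by
  set N := ⌊z⌋₊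
  set Q := {p ∈ Icc 1 N | p.Prime}
  set B := ∑ a ∈ Icc 1 N, g a
  have hQ : ∀ d ∈ Icc 1 N, d ≠ 0 ∧ d.primeFactors ⊆ Q ∧
      ∀ p ∈ Q, d.factorization p ∈ range (⌊Real.log z / Real.log p⌋₊ + 1) := fun d hd =>
    have hd0 : d ≠ 0 := by have := mem_Icc.mp hd; omega
    have hdz : (d : ℝ) ≤ z := (Nat.le_floor_iff (by linarith)).mp (mem_Icc.mp hd).2
    ⟨hd0, primeFactors_subset_filter_prime_Icc hd, fun p hp => mem_range_succ_iff.mpr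
      (factorization_le_floor_log_div_log (mem_filter.mp hp).2 hd0 hdz)⟩
  calc ∑ a ∈ Icc 1 N, g a * ∑ d ∈ a.divisors, ψ d
      = ∑ d ∈ Icc 1 N, ψ d * ∑ a ∈ Icc 1 N with d ∣ a, g a := sum_Icc_mul_sum_divisors N g ψ
    _ ≤ ∑ d ∈ Icc 1 N, (∏ p ∈ Q, decouplingWeight g ψ p (d.factorization p)) * B := by
        refine sum_le_sum fun d hd => ?_
        obtain ⟨hd0, hdQ, -⟩ := hQ d hd
        rw [← mul_prod_tsum_eq_prod_decouplingWeight hψ1 hψmul hd0 hdQ, mul_assoc]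
        exact mul_le_mul_of_nonneg_left (sum_filter_dvd_le hg0 hg1 hgmul hsum hd0 N) (hψ0 d)
    _ ≤ (∏ p ∈ Q, ∑ v ∈ range (⌊Real.log z / Real.log p⌋₊ + 1), decouplingWeight g ψ p v) *
          B := by
        rw [← sum_mul]
        exact mul_le_mul_of_nonneg_right (sum_prod_factorization_le_prod_sum _ _
          (decouplingWeight_nonneg hg0 hψ0) hQ) (sum_nonneg fun _ _ => hg0 _)
    _ = _ := by simp only [sum_range_decouplingWeight]
end

section
/- Let q(x,y) ∈ ℤ[x,y] be a primitive binary quadratic form of discriminant D < 0, ω ∈ ℤ, and Q(x,y) = q(x,y) − ωD. Then for every prime power p^n, the number ρ_Q(p^n) of solutions (x,y) ∈ (ℤ/p^nℤ)² to Q(x,y) ≡ 0 (mod p^n) satisfies ρ_Q(p^n) ≤ 16 · p^{3n/2}. -/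
/-!
One of `c`, `a`, `a + b + c = q(1, 1)` is prime to `p`, so after a unimodular change of variables
`c` is a unit mod `p ^ n`. For fixed `x`, completing the square turns `q(x, y) = m` into
`t ^ 2 = Δ` with `t = 2 c y + b x`, and `y ↦ t` is at most two-to-one (its fibres are cosets of
the `2`-torsion). Finally `t ^ 2 = t₀ ^ 2` means `(t - t₀) (t + t₀) = 0`, and since `p`-adic
valuations add, `p ^ ⌊n/2⌋` kills one of the two factors; so `t` lies in one of two cosets of the
`p ^ ⌊n/2⌋`-torsion, each of size `p ^ ⌊n/2⌋`. Altogether `ρ ≤ p ^ n · 2 · 2 p ^ ⌊n/2⌋`.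
-/

open Finset

theorem card_nsmul_sub_eq_zero_le {G : Type*} [AddCommGroup G] [Fintype G] [DecidableEq G]
    [IsAddCyclic G] {k : ℕ} (hk : 0 < k) (w : G) : #{t | k • (t - w) = 0} ≤ k :=
  calc #{t | k • (t - w) = 0}
      ≤ #{s : G | k • s = 0} :=
        card_le_card_of_injOn (· - w) (fun t ht => by simpa using ht)
          (fun _ _ _ _ h => sub_left_injective h)
    _ ≤ k := IsAddCyclic.card_nsmul_eq_zero_le hk

theorem Int.pow_dvd_or_pow_dvd_of_pow_dvd_mul {p : ℕ} [Fact p.Prime] {n i j : ℕ} {x y : ℤ}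
    (hij : i + j ≤ n + 1) (h : (p : ℤ) ^ n ∣ x * y) : (p : ℤ) ^ i ∣ x ∨ (p : ℤ) ^ j ∣ y := by
  rcases eq_or_ne x 0 with rfl | hx
  · exact .inl (dvd_zero _)
  rcases eq_or_ne y 0 with rfl | hy
  · exact .inr (dvd_zero _)
  rw [padicValInt_dvd_iff, padicValInt.mul hx hy, or_iff_right (mul_ne_zero hx hy)] at h
  simp only [padicValInt_dvd_iff, hx, hy, false_or]
  omega

theorem Int.not_dvd_or_not_dvd_or_not_dvd_add_of_gcd_eq_one {p a b c : ℤ} (hp : Prime p)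
    (hprim : Int.gcd a (Int.gcd b c) = 1) : ¬ p ∣ c ∨ ¬ p ∣ a ∨ ¬ p ∣ a + b + c := by
  by_contra! ⟨hc, ha, habc⟩
  have hb : p ∣ b := by simpa only [show a + b + c - a - c = b by ring] using (habc.sub ha).sub hc
  have := Int.dvd_coe_gcd ha (Int.dvd_coe_gcd hb hc)
  rw [hprim, Nat.cast_one] at this
  exact hp.not_dvd_one this

section PrimePower

variable {p n : ℕ} [Fact p.Prime]

theorem ZMod.pow_mul_eq_zero_or_pow_mul_eq_zero {a b : ℕ} (hab : n ≤ a + b + 1)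
    {x y : ZMod (p ^ n)} (hxy : x * y = 0) :
    (p : ZMod (p ^ n)) ^ a * x = 0 ∨ (p : ZMod (p ^ n)) ^ b * y = 0 := by
  obtain ⟨X, rfl⟩ := ZMod.intCast_surjective x
  obtain ⟨Y, rfl⟩ := ZMod.intCast_surjective y
  have hdvd : ∀ {c : ℕ} {Z : ℤ}, (p : ℤ) ^ (n - c) ∣ Z → (p : ZMod (p ^ n)) ^ c * Z = 0 := by
    intro c Z hZ
    rw [← Int.cast_natCast, ← Int.cast_pow, ← Int.cast_mul, ZMod.intCast_zmod_eq_zero_iff_dvd,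
      Nat.cast_pow]
    calc (p : ℤ) ^ n ∣ (p : ℤ) ^ c * (p : ℤ) ^ (n - c) := by
          rw [← pow_add]; exact pow_dvd_pow _ (by omega)
      _ ∣ (p : ℤ) ^ c * Z := mul_dvd_mul_left _ hZ
  rw [← Int.cast_mul, ZMod.intCast_zmod_eq_zero_iff_dvd, Nat.cast_pow] at hxy
  exact (Int.pow_dvd_or_pow_dvd_of_pow_dvd_mul (by omega) hxy).imp hdvd hdvd

theorem ZMod.isUnit_intCast_of_not_dvd {z : ℤ} (hz : ¬ (p : ℤ) ∣ z) :
    IsUnit (z : ZMod (p ^ n)) := by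
  rw [ZMod.coe_int_isUnit_iff_isCoprime, Nat.cast_pow]
  exact ((Nat.prime_iff_prime_int.mp Fact.out).coprime_iff_not_dvd.mpr hz).pow_left

theorem ZMod.card_sq_eq_le (u : ZMod (p ^ n)) : #{t | t ^ 2 = u} ≤ 2 * p ^ (n / 2) := by
  by_cases hu : ∃ t₀, t₀ ^ 2 = u
  swap
  · simp [filter_eq_empty_iff.mpr fun t _ ht => hu ⟨t, ht⟩]
  obtain ⟨t₀, rfl⟩ := hu
  have hroots : #{t | t ^ 2 = t₀ ^ 2} ≤
      #(({t | p ^ (n / 2) • (t - t₀) = 0} : Finset _) ∪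
        ({t | p ^ (n / 2) • (t - -t₀) = 0} : Finset _)) := by
    refine card_le_card fun t ht => ?_
    have hfactor : (t - t₀) * (t - -t₀) = 0 := by
      linear_combination (mem_filter.mp ht).2
    simpa only [mem_union, mem_filter, mem_univ, true_and, nsmul_eq_mul, Nat.cast_pow] using
      ZMod.pow_mul_eq_zero_or_pow_mul_eq_zero (a := n / 2) (b := n / 2) (by omega) hfactor
  have hk : 0 < p ^ (n / 2) := pow_pos (Fact.out : p.Prime).pos _
  calc #{t | t ^ 2 = t₀ ^ 2} ≤ _ := hroots
    _ ≤ p ^ (n / 2) + p ^ (n / 2) := (card_union_le _ _).trans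
      (add_le_add (card_nsmul_sub_eq_zero_le hk t₀) (card_nsmul_sub_eq_zero_le hk (-t₀)))
    _ = 2 * p ^ (n / 2) := (two_mul _).symm

theorem ZMod.card_quadratic_eq_zero_le {a : ZMod (p ^ n)} (ha : IsUnit a) (b c : ZMod (p ^ n)) :
    #{x | a * x ^ 2 + b * x + c = 0} ≤ 4 * p ^ (n / 2) := by
  have hmaps : ∀ x ∈ ({x | a * x ^ 2 + b * x + c = 0} : Finset _),
      2 * a * x + b ∈ ({t | t ^ 2 = b ^ 2 - 4 * a * c} : Finset _) := by
    intro x hx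
    simp only [mem_filter, mem_univ, true_and] at hx ⊢
    linear_combination 4 * a * hx
  have hfibers : ∀ t ∈ ({t | t ^ 2 = b ^ 2 - 4 * a * c} : Finset _),
      #{x ∈ ({x | a * x ^ 2 + b * x + c = 0} : Finset _) | 2 * a * x + b = t} ≤ 2 := by
    intro t _
    rcases Finset.eq_empty_or_nonempty
      {x ∈ ({x | a * x ^ 2 + b * x + c = 0} : Finset _) | 2 * a * x + b = t} with he | ⟨x₀, hx₀⟩
    · simp [he]
    refine (card_le_card fun x hx => ?_).trans (card_nsmul_sub_eq_zero_le two_pos x₀)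
    simp only [mem_filter, mem_univ, true_and] at hx hx₀ ⊢
    have : a * (2 • (x - x₀)) = 0 := by
      rw [nsmul_eq_mul]; linear_combination hx.2 - hx₀.2
    exact (ha.mul_right_eq_zero).mp this
  calc #{x | a * x ^ 2 + b * x + c = 0} ≤ 2 * #{t | t ^ 2 = b ^ 2 - 4 * a * c} :=
        card_le_mul_card_image_of_maps_to hmaps 2 hfibers
    _ ≤ 2 * (2 * p ^ (n / 2)) := Nat.mul_le_mul_left 2 (ZMod.card_sq_eq_le _)
    _ = 4 * p ^ (n / 2) := by ring

end PrimePower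

noncomputable def binaryFormCount (R : Type*) [CommRing R] (a b c m : R) : ℕ :=
  Nat.card {v : R × R // a * v.1 ^ 2 + b * v.1 * v.2 + c * v.2 ^ 2 = m}

section BinaryFormCount

variable {R : Type*} [CommRing R]

theorem binaryFormCount_swap (a b c m : R) :
    binaryFormCount R a b c m = binaryFormCount R c b a m :=
  Nat.card_congr <| (Equiv.prodComm R R).subtypeEquiv fun v => by
    simp only [Equiv.prodComm_apply, Prod.fst_swap, Prod.snd_swap]
    constructor <;> intro h <;> linear_combination h

theorem binaryFormCount_shear (a b c m : R) :
    binaryFormCount R a b c m = binaryFormCount R a (2 * a + b) (a + b + c) m :=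
  Nat.card_congr <| Equiv.subtypeEquiv
    ⟨fun v => (v.1 - v.2, v.2), fun v => (v.1 + v.2, v.2), fun v => by simp, fun v => by simp⟩
    fun v => by
      simp only [Equiv.coe_fn_mk]
      constructor <;> intro h <;> linear_combination h

end BinaryFormCount

theorem binaryFormCount_le_of_isUnit {p n : ℕ} [Fact p.Prime] (a b : ZMod (p ^ n))
    {c : ZMod (p ^ n)} (hc : IsUnit c) (m : ZMod (p ^ n)) :
    binaryFormCount (ZMod (p ^ n)) a b c m ≤ 4 * p ^ (n + n / 2) := by
  classical
  have hfiber : ∀ x : ZMod (p ^ n),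
      Nat.card {y // a * x ^ 2 + b * x * y + c * y ^ 2 = m} ≤ 4 * p ^ (n / 2) := fun x => by
    rw [Nat.card_eq_fintype_card, Fintype.card_subtype]
    refine le_of_eq_of_le (congrArg card (filter_congr fun y _ => ?_))
      (ZMod.card_quadratic_eq_zero_le hc (b * x) (a * x ^ 2 - m))
    constructor <;> intro h <;> linear_combination h
  calc binaryFormCount (ZMod (p ^ n)) a b c m
      = ∑ x : ZMod (p ^ n), Nat.card {y // a * x ^ 2 + b * x * y + c * y ^ 2 = m} := by
        rw [binaryFormCount, Nat.card_congr (Equiv.subtypeProdEquivSigmaSubtype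
          fun x y => a * x ^ 2 + b * x * y + c * y ^ 2 = m), Nat.card_sigma]
    _ ≤ ∑ _x : ZMod (p ^ n), 4 * p ^ (n / 2) := sum_le_sum fun x _ => hfiber x
    _ = 4 * p ^ (n + n / 2) := by
        rw [sum_const, card_univ, ZMod.card, smul_eq_mul, pow_add]; ring

theorem stmt_17_general (a b c : ℤ) (hprim : Int.gcd a (Int.gcd b c) = 1)
    (ω : ℤ) (p : ℕ) (hp : p.Prime) (n : ℕ) :
    (Nat.card {v : ZMod (p ^ n) × ZMod (p ^ n) //
        (a : ZMod (p ^ n)) * v.1 ^ 2 + (b : ZMod (p ^ n)) * v.1 * v.2 +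
            (c : ZMod (p ^ n)) * v.2 ^ 2 =
          ((ω * (b ^ 2 - 4 * a * c) : ℤ) : ZMod (p ^ n))} : ℝ) ≤
      16 * (p : ℝ) ^ (3 * (n : ℝ) / 2) := by
  have := Fact.mk hp
  have hcount : binaryFormCount (ZMod (p ^ n)) a b c (ω * (b ^ 2 - 4 * a * c) : ℤ) ≤
      4 * p ^ (n + n / 2) := by
    rcases Int.not_dvd_or_not_dvd_or_not_dvd_add_of_gcd_eq_one
      (Nat.prime_iff_prime_int.mp hp) hprim with hc | ha | habc
    · exact binaryFormCount_le_of_isUnit _ _ (ZMod.isUnit_intCast_of_not_dvd hc) _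
    · rw [binaryFormCount_swap]
      exact binaryFormCount_le_of_isUnit _ _ (ZMod.isUnit_intCast_of_not_dvd ha) _
    · rw [binaryFormCount_shear]
      refine binaryFormCount_le_of_isUnit _ _ ?_ _
      exact_mod_cast ZMod.isUnit_intCast_of_not_dvd (n := n) habc
  have hexp : ((n + n / 2 : ℕ) : ℝ) ≤ 3 * n / 2 := by
    push_cast
    linarith [Nat.cast_div_le (α := ℝ) (m := n) (n := 2)]
  calc (Nat.card _ : ℝ) ≤ 4 * (p : ℝ) ^ (n + n / 2) := by exact_mod_cast hcount
    _ ≤ 16 * (p : ℝ) ^ (3 * (n : ℝ) / 2) := by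
      rw [← Real.rpow_natCast]
      have hp1 : (1 : ℝ) ≤ p := by exact_mod_cast hp.one_lt.le
      have := Real.rpow_le_rpow_of_exponent_le hp1 hexp
      nlinarith [Real.rpow_nonneg (zero_le_one.trans hp1) ((n + n / 2 : ℕ) : ℝ)]

/-- For `q` a primitive binary quadratic form of discriminant `D < 0`, `ω ∈ ℤ` and
`Q = q − ωD`, the solution count satisfies `ρ_Q(p^n) ≤ 16 · p^{3n/2}` for every prime
power `p^n`. -/
theorem stmt_17 (a b c : ℤ) (hprim : Int.gcd a (Int.gcd b c) = 1)
    (hD : b ^ 2 - 4 * a * c < 0) (ω : ℤ) (p : ℕ) (hp : p.Prime) (n : ℕ) :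
    (Nat.card {v : ZMod (p ^ n) × ZMod (p ^ n) //
        (a : ZMod (p ^ n)) * v.1 ^ 2 + (b : ZMod (p ^ n)) * v.1 * v.2 +
            (c : ZMod (p ^ n)) * v.2 ^ 2 =
          ((ω * (b ^ 2 - 4 * a * c) : ℤ) : ZMod (p ^ n))} : ℝ) ≤
      16 * (p : ℝ) ^ (3 * (n : ℝ) / 2) :=
  stmt_17_general a b c hprim ω p hp n
end
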